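/- arXiv:0902.0771 — 2 statements merged into one kernel-verified Lean document; each statement's English description precedes it below -/
import Mathlib

section
/- Let ℐ be an implication algebra. Then: (1) for all x, y ∈ ℐ, if ⟨1, x⟩ ∼ ⟨1, y⟩ in 𝖨(ℐ) then x = y; and (2) every ⟨x, y⟩ ∈ 𝖨(ℐ) satisfies ⟨x, y⟩ ∼ ⟨1, x ∧ y⟩. Consequently the map sending x ∈ ℐ to the ∼-equivalence class of ⟨1, x⟩ is a bijection from ℐ onto 𝖨(ℐ)/∼. -/
universe u

/-- An implication algebra, with its (unique) top element `one = a → a`. -/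
class ImplicationAlgebra (I : Type u) where
  impl : I → I → I
  one : I
  impl_self : ∀ a : I, impl a a = one
  contraction : ∀ a b : I, impl (impl a b) a = a
  quasi_comm : ∀ a b : I, impl (impl a b) b = impl (impl b a) a
  exchange : ∀ a b c : I, impl a (impl b c) = impl b (impl a c)

namespace ImplicationAlgebra

variable {I : Type u} [ImplicationAlgebra I]

/-- The partial order: `a ≤ b` iff `a → b = 1`. -/
def le (a b : I) : Prop := impl a b = one

/-- The join: `a ∨ b = (a → b) → b`. -/
def join (a b : I) : I := impl (impl a b) b

/-- `m` is the greatest lower bound of `a` and `b`. -/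
def IsMeet (a b m : I) : Prop := le m a ∧ le m b ∧ ∀ c : I, le c a → le c b → le c m

/-- `⟨a,b⟩ ∼ ⟨c,d⟩` in `𝖨(I)`: `Δ(⟨a,b⟩ ∨ ⟨c,d⟩, ⟨c,d⟩) = ⟨a,b⟩`, written out
componentwise via the (existing) meets. -/
def psim (p q : I × I) : Prop :=
  IsMeet (join p.1 q.1) (impl (join p.2 q.2) q.2) p.1 ∧
  IsMeet (join p.2 q.2) (impl (join p.1 q.1) q.1) p.2

lemma impl_one_left (x : I) : impl one x = x := by
  have h := contraction x x
  rwa [impl_self] at h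

lemma le_one (x : I) : le x one := by
  have h := contraction one x
  rw [impl_one_left] at h
  exact h

lemma join_one_left (x : I) : join one x = one := by
  unfold join
  rw [impl_one_left, impl_self]

/-- The carrier of `𝖨(I)`: pairs `⟨a,b⟩` with `a ∨ b = 1` and `a ∧ b` existing. -/
def II (I : Type u) [ImplicationAlgebra I] : Type u :=
  {p : I × I // join p.1 p.2 = one ∧ ∃ m : I, IsMeet p.1 p.2 m}

/-- The natural embedding `x ↦ ⟨1, x⟩` of `I` into `𝖨(I)`. -/
def emb (x : I) : II I :=
  ⟨(one, x), join_one_left x, x, le_one x, impl_self x, fun _ _ hc => hc⟩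

end ImplicationAlgebra

/-!
If `a ∨ b = 1` and `m = a ∧ b`, then `a` and `b` are complements of each other in the interval
`[m, 1]`: `a → m = b` and `b → m = a`. Unfolding `Δ`, this is exactly `⟨a, b⟩ ∼ ⟨1, m⟩`, which
gives surjectivity. Conversely, `∼`-related pairs have the same meet, so the meet is an invariant
of a `∼`-class; since the meet of `⟨1, x⟩` is `x`, the map is injective.
-/

namespace ImplicationAlgebra

variable {I : Type u} [ImplicationAlgebra I]

lemma le.refl (x : I) : le x x := impl_self x

lemma one_le_iff {x : I} : le one x ↔ x = one := by
  unfold le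
  rw [impl_one_left]

lemma join_comm (a b : I) : join a b = join b a := quasi_comm a b

lemma join_one_right (x : I) : join x one = one := by
  unfold join
  rw [le_one x, impl_self]

lemma join_eq_right {a b : I} (h : le a b) : join a b = b := by
  unfold join
  rw [h, impl_one_left]

lemma le_impl (x y : I) : le y (impl x y) := by
  show impl y (impl x y) = one
  rw [exchange, impl_self]
  exact le_one x

lemma le_join_left (a b : I) : le a (join a b) := by
  show impl a (impl (impl a b) b) = one
  rw [exchange, impl_self]

lemma le_join_right (a b : I) : le b (join a b) := le_impl _ _

lemma le.antisymm {a b : I} (h₁ : le a b) (h₂ : le b a) : a = b := by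
  rw [← join_eq_right h₂, join_comm, join_eq_right h₁]

lemma le.trans {a b c : I} (h₁ : le a b) (h₂ : le b c) : le a c := by
  have hc : impl (impl c b) b = c := by
    rw [← quasi_comm]
    exact join_eq_right h₂
  show impl a c = one
  rw [← hc, exchange, h₁, le_one]

lemma impl_le_impl_left {x y : I} (z : I) (h : le x y) : le (impl z x) (impl z y) := by
  have hy : impl (impl y x) x = y := by rw [quasi_comm, h, impl_one_left]
  show impl (impl z x) (impl z y) = one
  rw [← hy, exchange z]
  exact le_impl _ _

lemma impl_le_impl_right {x y : I} (z : I) (h : le x y) : le (impl y z) (impl x z) := by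
  show impl (impl y z) (impl x z) = one
  rw [exchange]
  exact h.trans (le_join_left y z)

lemma impl_impl_self (a b : I) : impl a (impl a b) = impl a b := by
  have h := contraction (impl a b) a
  rwa [contraction a b] at h

lemma le_of_le_of_le_impl {t x y : I} (h₁ : le t x) (h₂ : le t (impl x y)) : le t y := by
  have hx : le x (impl t y) := by
    show impl x (impl t y) = one
    rw [exchange]
    exact h₂
  show impl t y = one
  rw [← impl_impl_self]
  exact h₁.trans hx

lemma impl_le_of_impl_le {x m v : I} (hm : le m x) (hv : le (impl x m) v) :
    le (impl v m) x := by
  have h := (impl_le_impl_left v hm).trans (impl_le_impl_right x hv)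
  rwa [contraction] at h

lemma IsMeet.unique {a b m m' : I} (h : IsMeet a b m) (h' : IsMeet a b m') : m = m' :=
  le.antisymm (h'.2.2 m h.1 h.2.1) (h.2.2 m' h'.1 h'.2.1)

lemma IsMeet.symm {a b m : I} (h : IsMeet a b m) : IsMeet b a m :=
  ⟨h.2.1, h.1, fun c hb ha => h.2.2 c ha hb⟩

lemma isMeet_of_le {a b : I} (h : le a b) : IsMeet a b a :=
  ⟨le.refl a, h, fun _ ha _ => ha⟩

lemma impl_eq_of_isMeet {a b m : I} (hj : join a b = one) (hm : IsMeet a b m) :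
    impl a m = b := by
  have hab : impl a b = b := le.antisymm hj (le_impl a b)
  have hu : le (impl a m) b := by simpa only [hab] using impl_le_impl_left a hm.2.1
  -- `v := b → (a → m)` lies above both `a → m` and `b → m`, which forces `v → m = m`.
  have hv : impl (impl b (impl a m)) m = m := by
    refine le.antisymm (hm.2.2 _ ?_ ?_) (le_impl _ m)
    · exact impl_le_of_impl_le hm.1 (le_impl b _)
    · refine impl_le_of_impl_le hm.2.1 ?_
      rw [exchange b a m]
      exact le_impl a _
  calc impl a m = impl a (impl (impl b (impl a m)) m) := by rw [hv]
    _ = impl (impl b (impl a m)) (impl a m) := exchange _ _ _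
    _ = impl (impl (impl a m) b) b := quasi_comm _ _
    _ = b := by rw [hu, impl_one_left]

lemma psim_one_of_isMeet {a b m : I} (hj : join a b = one) (hm : IsMeet a b m) :
    psim (a, b) (one, m) := by
  have hba : impl b m = a := impl_eq_of_isMeet ((join_comm b a).trans hj) hm.symm
  have hbm : join b m = b := by
    unfold join
    rw [hba, impl_eq_of_isMeet hj hm]
  constructor
  · show IsMeet (join a one) (impl (join b m) m) a
    rw [join_one_right, hbm, hba]
    exact (isMeet_of_le (le_one a)).symm
  · show IsMeet (join b m) (impl (join a one) one) b
    rw [hbm, join_one_right, impl_self]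
    exact isMeet_of_le (le_one b)

lemma eq_of_psim_one {x y : I} (h : psim (one, x) (one, y)) : x = y := by
  obtain ⟨h₁, h₂⟩ := h
  simp only [join_one_left, impl_self] at h₁ h₂
  have hy : join x y = y :=
    le.antisymm (one_le_iff.mp h₁.2.1 : le (join x y) y) (le_join_right x y)
  exact (h₂.unique (isMeet_of_le (le_one _))).trans hy

lemma eq_of_psim_of_isMeet {a b c d m m' : I} (h : psim (a, b) (c, d))
    (hm : IsMeet a b m) (hm' : IsMeet c d m') : m = m' := by
  obtain ⟨h₁, h₂⟩ := h
  refine hm.unique ⟨?_, ?_, fun t hta htb => hm'.2.2 t ?_ ?_⟩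
  · exact h₁.2.2 m' (hm'.1.trans (le_join_right a c)) (hm'.2.1.trans (le_impl _ _))
  · exact h₂.2.2 m' (hm'.2.1.trans (le_join_right b d)) (hm'.1.trans (le_impl _ _))
  · exact le_of_le_of_le_impl (hta.trans (le_join_left a c)) (htb.trans h₂.2.1)
  · exact le_of_le_of_le_impl (htb.trans (le_join_left b d)) (hta.trans h₁.2.1)

noncomputable def II.meet (p : II I) : I := p.2.2.choose

lemma II.isMeet_meet (p : II I) : IsMeet p.1.1 p.1.2 p.meet := p.2.2.choose_spec

lemma II.meet_emb (x : I) : (emb x).meet = x :=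
  (emb x).isMeet_meet.unique (isMeet_of_le (le_one x)).symm

end ImplicationAlgebra

open ImplicationAlgebra in
/-- `⟨1,x⟩ ∼ ⟨1,y⟩` implies `x = y`; every `⟨x,y⟩ ∈ 𝖨(ℐ)` satisfies
`⟨x,y⟩ ∼ ⟨1, x ∧ y⟩`; hence `x ↦ [⟨1,x⟩]` is a bijection of `ℐ` with `𝖨(ℐ)/∼`. -/
theorem emb_quotient_bijective {I : Type u} [ImplicationAlgebra I] :
    (∀ x y : I, psim (one, x) (one, y) → x = y) ∧
    (∀ a b m : I, join a b = one → IsMeet a b m → psim (a, b) (one, m)) ∧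
    Function.Bijective
      (fun x : I => Quot.mk (fun p q : II I => psim p.1 q.1) (emb x)) := by
  refine ⟨fun _ _ => eq_of_psim_one, fun _ _ _ => psim_one_of_isMeet, fun x y hxy => ?_,
    fun q => ?_⟩
  · have h := congrArg (Quot.lift II.meet fun p q hpq =>
      eq_of_psim_of_isMeet hpq p.isMeet_meet q.isMeet_meet) hxy
    simpa only [II.meet_emb] using h
  · obtain ⟨p, rfl⟩ := Quot.exists_rep q
    refine ⟨p.meet, (Quot.sound ?_).symm⟩
    exact psim_one_of_isMeet p.2.1 p.isMeet_meet
end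

section
/- Let L be a cubic algebra and x, y ∈ L. If x ≼ y and x ∨ Δ(1, y) = 1, then x ≤ y. -/
universe u

/-- A cubic algebra: a join-semilattice with greatest element `⊤` and a binary
operation `Δ` satisfying the axioms of Bailey–Oliveira. `dot x y` is the derived
implication operation `x·y = Δ(⊤, Δ(x ⊔ y, y)) ⊔ y`. -/
class CubicAlgebra (L : Type u) extends SemilatticeSup L, OrderTop L where
  Δ : L → L → L
  dot : L → L → L
  dot_def : ∀ x y : L, dot x y = Δ ⊤ (Δ (x ⊔ y) y) ⊔ y
  Δ_join : ∀ x y : L, x ≤ y → Δ y x ⊔ x = y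
  Δ_comp : ∀ x y z : L, x ≤ y → y ≤ z → Δ z (Δ y x) = Δ (Δ z y) (Δ z x)
  Δ_invol : ∀ x y : L, x ≤ y → Δ y (Δ y x) = x
  Δ_mono : ∀ x y z : L, x ≤ y → y ≤ z → Δ z x ≤ Δ z y
  dot_dot : ∀ x y : L, dot (dot x y) y = x ⊔ y
  dot_exch : ∀ x y z : L, dot x (dot y z) = dot y (dot x z)

namespace CubicAlgebra

variable {L : Type u} [CubicAlgebra L]

/-- `a ∼ b` iff `Δ(a ⊔ b, a) = b`. -/
def sim (a b : L) : Prop := Δ (a ⊔ b) a = b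

/-- `m` is the greatest lower bound of `a` and `b`. -/
def IsMeet (a b m : L) : Prop := m ≤ a ∧ m ≤ b ∧ ∀ c : L, c ≤ a → c ≤ b → c ≤ m

/-- A special subalgebra of a cubic algebra. -/
structure IsSpecial (S : Set L) : Prop where
  top_mem : (⊤ : L) ∈ S
  upward : ∀ x ∈ S, ∀ y : L, x ≤ y → y ∈ S
  dot_mem : ∀ x ∈ S, ∀ y ∈ S, dot x y ∈ S
  compat : ∀ x ∈ S, ∀ y ∈ S, x ⊔ Δ ⊤ y = ⊤
  meet_mem : ∀ x ∈ S, ∀ y ∈ S, ∀ m : L, IsMeet x y m → m ∈ S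

/-- `A ∨ B` for sets: all existing meets `a ∧ b`, `a ∈ A`, `b ∈ B`. -/
def svee (A B : Set L) : Set L := {z | ∃ a ∈ A, ∃ b ∈ B, IsMeet a b z}

/-- `J → I` for sets. -/
def sarrow (J I : Set L) : Set L := {h | h ∈ I ∧ ∀ g ∈ J, h ⊔ g = ⊤}

/-- `Δ(J, I) := J ∨ Δ(⊤, J → I)`. -/
def sDelta (J I : Set L) : Set L := svee J ((fun b => Δ ⊤ b) '' sarrow J I)

/-- `I_g := {Δ(g ⊔ f, f) : f ∈ I}`. -/
def shift (I : Set L) (g : L) : Set L := {z | ∃ f ∈ I, z = Δ (g ⊔ f) f}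

end CubicAlgebra

/-!
From `x ≼ y` one gets `x ≤ Δ(x ⊔ y, y)`; applying the order automorphism `Δ(⊤, -)` and the
compatibility `x ⊔ Δ(⊤, y) = ⊤` then forces `x·y = ⊤`, so `x ⊔ y = (x·y)·y = ⊤·y = y`.
-/

namespace CubicAlgebra

variable {L : Type u} [CubicAlgebra L]

theorem Δ_self (a : L) : Δ a a = a := by
  have hle : Δ a a ≤ a := le_sup_left.trans_eq (Δ_join a a le_rfl)
  refine le_antisymm hle ?_
  simpa only [Δ_invol a a le_rfl] using Δ_mono (Δ a a) a a hle le_rfl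

def ΔTop : L ≃o L where
  toFun := Δ ⊤
  invFun := Δ ⊤
  left_inv a := Δ_invol a ⊤ le_top
  right_inv a := Δ_invol a ⊤ le_top
  map_rel_iff' {a b} := by
    refine ⟨fun h => ?_, fun h => Δ_mono a b ⊤ h le_top⟩
    simpa only [Δ_invol _ ⊤ le_top] using Δ_mono (Δ ⊤ a) (Δ ⊤ b) ⊤ h le_top

theorem Δ_top_sup (a b : L) : Δ ⊤ (a ⊔ b) = Δ ⊤ a ⊔ Δ ⊤ b :=
  (ΔTop : L ≃o L).map_sup a b

theorem le_Δ_of_Δ_le {x y s : L} (hxs : x ≤ s) (hys : y ≤ s) (h : Δ s x ≤ y) :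
    x ≤ Δ s y := by
  simpa only [Δ_invol x s hxs] using Δ_mono (Δ s x) y s h hys

theorem top_dot (y : L) : dot ⊤ y = y := by
  rw [dot_def, top_sup_eq, Δ_invol y ⊤ le_top, sup_idem]

theorem le_of_dot_eq_top {x y : L} (h : dot x y = ⊤) : x ≤ y := by
  have := dot_dot x y
  rw [h, top_dot] at this
  exact le_of_sup_eq this.symm

theorem dot_eq_top_of_le_Δ {x y : L} (hx : x ≤ Δ (x ⊔ y) y) (h : x ⊔ Δ ⊤ y = ⊤) :
    dot x y = ⊤ := by
  have hcompat : Δ ⊤ x ⊔ y = ⊤ := by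
    simpa only [Δ_top_sup, Δ_invol y ⊤ le_top, Δ_self] using congrArg (Δ ⊤) h
  rw [dot_def]
  exact top_le_iff.mp <|
    hcompat.ge.trans (sup_le_sup_right (Δ_mono x _ ⊤ hx le_top) y)

end CubicAlgebra

open CubicAlgebra in
/-- If `x ≼ y` and `x ⊔ Δ(⊤, y) = ⊤` then `x ≤ y`. -/
theorem le_of_preceq_of_compat {L : Type u} [CubicAlgebra L] (x y : L)
    (h1 : Δ (x ⊔ y) x ≤ y) (h2 : x ⊔ Δ ⊤ y = ⊤) : x ≤ y :=
  le_of_dot_eq_top <| dot_eq_top_of_le_Δ (le_Δ_of_Δ_le le_sup_left le_sup_right h1) h2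
end
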